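/- Let Λ=(λ₁,…,λₙ) be a multiweight, μ > 0, and let f be a C^∞-smooth function on a neighborhood of 0 in ℂⁿ with f ∈ O(μ,Λ). Let C > 0, let {ε_j} be a sequence of positive reals with ε_j → 0, and let {α_j} ⊂ ℂⁿ be a sequence with σ_Λ(α_j) ≤ C ε_j for all j. Then for all multi-indices p, q ∈ ℕⁿ with wt(p) + wt(q) ≤ μ, one has lim_{j→∞} ε_j^{wt(p)+wt(q)−μ} (D^p D̄^q f)(α_j) = 0 (the expression being defined for all sufficiently large j, since α_j → 0). -/

import Mathlib

/- Wirtinger derivatives on smooth functions ℂⁿ → ℂ. -/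
noncomputable def wD {n : ℕ} (j : Fin n) (f : (Fin n → ℂ) → ℂ) : (Fin n → ℂ) → ℂ :=
  fun z => (1/2 : ℂ) *
    (fderiv ℝ f z (Pi.single j 1) - Complex.I * fderiv ℝ f z (Pi.single j Complex.I))

noncomputable def wDbar {n : ℕ} (j : Fin n) (f : (Fin n → ℂ) → ℂ) : (Fin n → ℂ) → ℂ :=
  fun z => (1/2 : ℂ) *
    (fderiv ℝ f z (Pi.single j 1) + Complex.I * fderiv ℝ f z (Pi.single j Complex.I))

/-- Iterated Wirtinger derivative `D^p`. -/
noncomputable def wDmulti {n : ℕ} (p : Fin n → ℕ) (f : (Fin n → ℂ) → ℂ) : (Fin n → ℂ) → ℂ :=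
  (List.finRange n).foldr (fun j g => (wD j)^[p j] g) f

/-- Iterated Wirtinger derivative `D̄^q`. -/
noncomputable def wDbarMulti {n : ℕ} (q : Fin n → ℕ) (f : (Fin n → ℂ) → ℂ) : (Fin n → ℂ) → ℂ :=
  (List.finRange n).foldr (fun j g => (wDbar j)^[q j] g) f

/-- `f ∈ O(μ,Λ)` : all derivatives `D^α D̄^β f` of weight `≤ μ` vanish at the origin. -/
def memO {n : ℕ} (Λ : Fin n → ℝ) (μ : ℝ) (f : (Fin n → ℂ) → ℂ) : Prop :=
  ∀ α β : Fin n → ℕ, (∑ j, ((α j + β j : ℕ) : ℝ) * Λ j) ≤ μ →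
    wDmulti α (wDbarMulti β f) 0 = 0

/-- `σ_Λ(z) = Σ_j |z_j|^(1/λ_j)`. -/
noncomputable def sigmaL {n : ℕ} (Λ : Fin n → ℝ) (z : Fin n → ℂ) : ℝ :=
  ∑ j, ‖z j‖ ^ (1 / Λ j)

/-- `wt(p) = Σ_j p_j λ_j`. -/
noncomputable def wtL {n : ℕ} (Λ : Fin n → ℝ) (p : Fin n → ℕ) : ℝ :=
  ∑ j, (p j : ℝ) * Λ j

open Filter


open Set

section Aux

variable {n : ℕ} {Λ : Fin n → ℝ} {U : Set (Fin n → ℂ)} {g g₁ g₂ : (Fin n → ℂ) → ℂ}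

noncomputable def Dv {n : ℕ} (v : Fin n → ℂ) (g : (Fin n → ℂ) → ℂ) : (Fin n → ℂ) → ℂ :=
  fun z => fderiv ℝ g z v

noncomputable def Wop {n : ℕ} (c : ℂ) (j : Fin n) (g : (Fin n → ℂ) → ℂ) : (Fin n → ℂ) → ℂ :=
  fun z => (1/2 : ℂ) * (Dv (Pi.single j 1) g z + c * Dv (Pi.single j Complex.I) g z)

lemma Dv_contDiffOn (hU : IsOpen U) (hg : ContDiffOn ℝ (⊤:ℕ∞) g U) (v : Fin n → ℂ) :
    ContDiffOn ℝ (⊤:ℕ∞) (Dv v g) U :=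
  (hg.fderiv_of_isOpen hU (by simp)).clm_apply contDiffOn_const

lemma Wop_contDiffOn (hU : IsOpen U) (hg : ContDiffOn ℝ (⊤:ℕ∞) g U) (c : ℂ) (j : Fin n) :
    ContDiffOn ℝ (⊤:ℕ∞) (Wop c j g) U :=
  contDiffOn_const.mul ((Dv_contDiffOn hU hg _).add (contDiffOn_const.mul (Dv_contDiffOn hU hg _)))

lemma Dv_congr (hU : IsOpen U) (h : Set.EqOn g₁ g₂ U) {z : Fin n → ℂ} (hz : z ∈ U)
    (v : Fin n → ℂ) : Dv v g₁ z = Dv v g₂ z := by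
  unfold Dv
  rw [Filter.EventuallyEq.fderiv_eq (h.eventuallyEq_of_mem (hU.mem_nhds hz))]

lemma Wop_congr (hU : IsOpen U) (h : Set.EqOn g₁ g₂ U) {z : Fin n → ℂ} (hz : z ∈ U)
    (c : ℂ) (j : Fin n) : Wop c j g₁ z = Wop c j g₂ z := by
  unfold Wop
  rw [Dv_congr hU h hz, Dv_congr hU h hz]

lemma Dv_differentiableAt (hU : IsOpen U) (hg : ContDiffOn ℝ (⊤:ℕ∞) g U)
    {z : Fin n → ℂ} (hz : z ∈ U) (v : Fin n → ℂ) : DifferentiableAt ℝ (Dv v g) z :=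
  (((Dv_contDiffOn hU hg v).contDiffAt (hU.mem_nhds hz)).differentiableAt (by simp))

lemma Dv_comm (hU : IsOpen U) (hg : ContDiffOn ℝ (⊤:ℕ∞) g U) {z : Fin n → ℂ} (hz : z ∈ U)
    (v w : Fin n → ℂ) : Dv v (Dv w g) z = Dv w (Dv v g) z := by
  have hca : ContDiffAt ℝ (⊤:ℕ∞) g z := hg.contDiffAt (hU.mem_nhds hz)
  have hsym : IsSymmSndFDerivAt ℝ g z := hca.isSymmSndFDerivAt (by rw [minSmoothness_of_isRCLikeNormedField, show (2:WithTop ℕ∞) = ((2:ℕ∞):WithTop ℕ∞) from rfl]; exact WithTop.coe_le_coe.mpr le_top)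
  have hdf : DifferentiableAt ℝ (fderiv ℝ g) z :=
    (hca.fderiv_right (m := (⊤:ℕ∞)) (le_of_eq rfl)).differentiableAt (by simp)
  have key : ∀ u : Fin n → ℂ, fderiv ℝ (fun y => fderiv ℝ g y u) z =
      ((ContinuousLinearMap.apply ℝ ℂ u).comp (fderiv ℝ (fderiv ℝ g) z)) := by
    intro u
    exact ((ContinuousLinearMap.apply ℝ ℂ u).hasFDerivAt.comp z hdf.hasFDerivAt).fderiv
  show fderiv ℝ (fun y => fderiv ℝ g y w) z v = fderiv ℝ (fun y => fderiv ℝ g y v) z w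
  rw [key, key]
  simpa using hsym v w

lemma Dv_Wop (hU : IsOpen U) (hg : ContDiffOn ℝ (⊤:ℕ∞) g U) {z : Fin n → ℂ} (hz : z ∈ U)
    (c : ℂ) (j : Fin n) (v : Fin n → ℂ) :
    Dv v (Wop c j g) z = (1/2 : ℂ) * (Dv v (Dv (Pi.single j 1) g) z
      + c * Dv v (Dv (Pi.single j Complex.I) g) z) := by
  have hA : DifferentiableAt ℝ (Dv (Pi.single j 1) g) z := Dv_differentiableAt hU hg hz _
  have hB : DifferentiableAt ℝ (Dv (Pi.single j Complex.I) g) z := Dv_differentiableAt hU hg hz _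
  show fderiv ℝ (fun y => (1/2 : ℂ) * (Dv (Pi.single j 1) g y
      + c * Dv (Pi.single j Complex.I) g y)) z v = _
  rw [fderiv_const_mul (hA.fun_add (hB.const_mul c)), fderiv_fun_add hA (hB.const_mul c),
    fderiv_const_mul hB]
  simp [Dv, smul_eq_mul]; ring

lemma Wop_comm (hU : IsOpen U) (hg : ContDiffOn ℝ (⊤:ℕ∞) g U) {z : Fin n → ℂ} (hz : z ∈ U)
    (c d : ℂ) (i j : Fin n) : Wop c i (Wop d j g) z = Wop d j (Wop c i g) z := by
  show (1/2 : ℂ) * (Dv (Pi.single i 1) (Wop d j g) z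
      + c * Dv (Pi.single i Complex.I) (Wop d j g) z) = (1/2 : ℂ) * (Dv (Pi.single j 1) (Wop c i g) z
      + d * Dv (Pi.single j Complex.I) (Wop c i g) z)
  rw [Dv_Wop hU hg hz, Dv_Wop hU hg hz, Dv_Wop hU hg hz, Dv_Wop hU hg hz,
    Dv_comm hU hg hz (Pi.single i 1) (Pi.single j 1),
    Dv_comm hU hg hz (Pi.single i 1) (Pi.single j Complex.I),
    Dv_comm hU hg hz (Pi.single i Complex.I) (Pi.single j 1),
    Dv_comm hU hg hz (Pi.single i Complex.I) (Pi.single j Complex.I)]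
  ring

noncomputable def applyOps {n : ℕ} (L : List (ℂ × Fin n)) (g : (Fin n → ℂ) → ℂ) :
    (Fin n → ℂ) → ℂ :=
  L.foldr (fun x h => Wop x.1 x.2 h) g

lemma applyOps_nil : applyOps ([] : List (ℂ × Fin n)) g = g := rfl

lemma applyOps_cons (x : ℂ × Fin n) (L : List (ℂ × Fin n)) :
    applyOps (x :: L) g = Wop x.1 x.2 (applyOps L g) := rfl

lemma applyOps_append (L₁ L₂ : List (ℂ × Fin n)) :
    applyOps (L₁ ++ L₂) g = applyOps L₁ (applyOps L₂ g) := by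
  simp [applyOps, List.foldr_append]

lemma applyOps_contDiffOn (hU : IsOpen U) (hg : ContDiffOn ℝ (⊤:ℕ∞) g U)
    (L : List (ℂ × Fin n)) : ContDiffOn ℝ (⊤:ℕ∞) (applyOps L g) U := by
  induction L with
  | nil => exact hg
  | cons x t ih => exact Wop_contDiffOn hU ih x.1 x.2

lemma applyOps_congr (hU : IsOpen U) (h : Set.EqOn g₁ g₂ U) (L : List (ℂ × Fin n)) :
    Set.EqOn (applyOps L g₁) (applyOps L g₂) U := by
  induction L with
  | nil => exact h
  | cons x t ih => exact fun z hz => Wop_congr hU ih hz x.1 x.2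

lemma applyOps_perm (hU : IsOpen U) (hg : ContDiffOn ℝ (⊤:ℕ∞) g U)
    {L₁ L₂ : List (ℂ × Fin n)} (hperm : L₁.Perm L₂) :
    Set.EqOn (applyOps L₁ g) (applyOps L₂ g) U := by
  induction hperm with
  | nil => exact fun z _ => rfl
  | cons x h ih => exact fun z hz => Wop_congr hU ih hz x.1 x.2
  | swap x y l =>
      intro z hz
      exact Wop_comm hU (applyOps_contDiffOn hU hg l) hz _ _ _ _
  | trans h1 h2 ih1 ih2 => exact ih1.trans ih2

lemma wD_op (j : Fin n) : wD (n := n) j = Wop (-Complex.I) j := by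
  funext g z; simp only [wD, Wop, Dv]; ring

lemma wDbar_op (j : Fin n) : wDbar (n := n) j = Wop Complex.I j := by
  funext g z; simp only [wDbar, Wop, Dv]

def pList {n : ℕ} (c : ℂ) (p : Fin n → ℕ) : List (ℂ × Fin n) :=
  (List.finRange n).flatMap fun j => List.replicate (p j) (c, j)

lemma applyOps_replicate (m : ℕ) (c : ℂ) (j : Fin n) :
    applyOps (List.replicate m (c, j)) g = (Wop c j)^[m] g := by
  induction m with
  | zero => rfl
  | succ m ih => rw [List.replicate_succ, Function.iterate_succ_apply']; exact congrArg _ ih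


lemma wDmulti_eq (p : Fin n → ℕ) : wDmulti p g = applyOps (pList (-Complex.I) p) g := by
  show (List.finRange n).foldr (fun j g => (wD j)^[p j] g) g = _
  unfold pList
  induction (List.finRange n) with
  | nil => rfl
  | cons x t ih =>
      rw [List.foldr_cons, List.flatMap_cons, applyOps_append, ← ih,
        applyOps_replicate, wD_op]

lemma wDbarMulti_eq (q : Fin n → ℕ) : wDbarMulti q g = applyOps (pList Complex.I q) g := by
  show (List.finRange n).foldr (fun j g => (wDbar j)^[q j] g) g = _
  unfold pList
  induction (List.finRange n) with
  | nil => rfl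
  | cons x t ih =>
      rw [List.foldr_cons, List.flatMap_cons, applyOps_append, ← ih,
        applyOps_replicate, wDbar_op]

noncomputable def listWt {n : ℕ} (Λ : Fin n → ℝ) (L : List (ℂ × Fin n)) : ℝ :=
  (L.map fun x => Λ x.2).sum

lemma listWt_nil (Λ : Fin n → ℝ) : listWt Λ ([] : List (ℂ × Fin n)) = 0 := rfl

lemma listWt_append (Λ : Fin n → ℝ) (L₁ L₂ : List (ℂ × Fin n)) :
    listWt Λ (L₁ ++ L₂) = listWt Λ L₁ + listWt Λ L₂ := by
  simp [listWt]

lemma listWt_perm (Λ : Fin n → ℝ) {L₁ L₂ : List (ℂ × Fin n)} (h : L₁.Perm L₂) :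
    listWt Λ L₁ = listWt Λ L₂ :=
  (h.map _).sum_eq

lemma listWt_pList (Λ : Fin n → ℝ) (c : ℂ) (p : Fin n → ℕ) :
    listWt Λ (pList c p) = wtL Λ p := by
  rw [wtL, Fin.sum_univ_def]
  unfold pList
  induction (List.finRange n) with
  | nil => rfl
  | cons x t ih =>
      rw [List.flatMap_cons, listWt_append, ih, List.map_cons, List.sum_cons]
      congr 1
      simp [listWt, mul_comm]

lemma flatMap_add_perm (c : ℂ) (a b : Fin n → ℕ) (l : List (Fin n)) :
    (l.flatMap fun j => List.replicate ((a + b) j) (c, j)).Perm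
      ((l.flatMap fun j => List.replicate (a j) (c, j))
        ++ l.flatMap fun j => List.replicate (b j) (c, j)) := by
  induction l with
  | nil => simp
  | cons x t ih =>
      rw [List.flatMap_cons, List.flatMap_cons, List.flatMap_cons]
      have h1 : ((a + b) x) = a x + b x := rfl
      rw [h1, List.replicate_add]
      set Ra := List.replicate (a x) (c, x)
      set Rb := List.replicate (b x) (c, x)
      set A := t.flatMap fun j => List.replicate (a j) (c, j)
      set B := t.flatMap fun j => List.replicate (b j) (c, j)
      have step1 : ((Ra ++ Rb) ++ (t.flatMap fun j => List.replicate ((a + b) j) (c, j))).Perm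
          ((Ra ++ Rb) ++ (A ++ B)) := ih.append_left _
      refine step1.trans ?_
      have step2 : ((Rb ++ A) ++ B).Perm ((A ++ Rb) ++ B) :=
        (List.perm_append_comm).append_right _
      have : ((Ra ++ Rb) ++ (A ++ B)) = Ra ++ ((Rb ++ A) ++ B) := by
        simp [List.append_assoc]
      rw [this]
      have : ((Ra ++ A) ++ (Rb ++ B)) = Ra ++ ((A ++ Rb) ++ B) := by
        simp [List.append_assoc]
      rw [this]
      exact step2.append_left _

lemma pList_add_perm (c : ℂ) (a b : Fin n → ℕ) :
    (pList c (a + b)).Perm (pList c a ++ pList c b) := flatMap_add_perm c a b _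

lemma pList_single (c : ℂ) (j : Fin n) : pList c (Pi.single j 1) = [(c, j)] := by
  unfold pList
  have key : ∀ l : List (Fin n), j ∈ l → l.Nodup →
      (l.flatMap fun i => List.replicate ((Pi.single j 1 : Fin n → ℕ) i) (c, i)) = [(c, j)] := by
    intro l
    induction l with
    | nil => intro h; simp at h
    | cons x t ih =>
        intro hmem hnd
        rw [List.flatMap_cons]
        rcases List.mem_cons.1 hmem with rfl | hx
        · have ht : (t.flatMap fun i => List.replicate ((Pi.single j 1 : Fin n → ℕ) i) (c, i)) = [] := by
            rw [List.flatMap_eq_nil_iff]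
            intro i hi
            have hne : i ≠ j := by rintro rfl; exact (List.nodup_cons.1 hnd).1 hi
            simp [Pi.single_apply, hne]
          simp [ht]
        · have hne : x ≠ j := by rintro rfl; exact (List.nodup_cons.1 hnd).1 hx
          have hx0 : (Pi.single j 1 : Fin n → ℕ) x = 0 := by
            simp [Pi.single_apply, (Ne.symm hne)]
          rw [hx0]
          simpa using ih hx (List.nodup_cons.1 hnd).2
  exact key _ (List.mem_finRange j) (List.nodup_finRange n)

lemma decompose (L : List (ℂ × Fin n))
    (h : ∀ x ∈ L, x.1 = -Complex.I ∨ x.1 = Complex.I) :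
    ∃ a b : Fin n → ℕ, L.Perm (pList (-Complex.I) a ++ pList Complex.I b) := by
  induction L with
  | nil => exact ⟨0, 0, by simp [pList]⟩
  | cons x t ih =>
      obtain ⟨a, b, hper⟩ := ih fun y hy => h y (List.mem_cons_of_mem x hy)
      rcases h x List.mem_cons_self with hx | hx
      · refine ⟨a + Pi.single x.2 1, b, ?_⟩
        have h1 : (pList (-Complex.I) (a + Pi.single x.2 1)).Perm
            ((-Complex.I, x.2) :: pList (-Complex.I) a) :=
          (pList_add_perm _ a _).trans
            (by rw [pList_single]; exact List.perm_append_singleton _ _)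
        have hx' : x = (-Complex.I, x.2) := by
          rw [← hx]
        have step1 : (x :: t).Perm (x :: (pList (-Complex.I) a ++ pList Complex.I b)) :=
          hper.cons x
        refine step1.trans ?_
        have : x :: (pList (-Complex.I) a ++ pList Complex.I b)
            = ((-Complex.I, x.2) :: pList (-Complex.I) a) ++ pList Complex.I b := by
          rw [← hx']; rfl
        rw [this]
        exact h1.symm.append_right _
      · refine ⟨a, b + Pi.single x.2 1, ?_⟩
        have h1 : (pList Complex.I (b + Pi.single x.2 1)).Perm
            ((Complex.I, x.2) :: pList Complex.I b) :=
          (pList_add_perm _ b _).trans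
            (by rw [pList_single]; exact List.perm_append_singleton _ _)
        have hx' : x = (Complex.I, x.2) := by
          rw [← hx]
        have step1 : (x :: t).Perm (x :: (pList (-Complex.I) a ++ pList Complex.I b)) :=
          hper.cons x
        refine step1.trans (List.Perm.trans List.perm_middle.symm ?_)
        have : x :: pList Complex.I b = (Complex.I, x.2) :: pList Complex.I b := by rw [← hx']
        rw [this]
        exact h1.symm.append_left _

lemma sigmaL_nonneg (z : Fin n → ℂ) : 0 ≤ sigmaL Λ z :=
  Finset.sum_nonneg fun j _ => Real.rpow_nonneg (norm_nonneg _) _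

lemma sigmaL_zero (hΛpos : ∀ j, 0 < Λ j) : sigmaL Λ (0 : Fin n → ℂ) = 0 := by
  unfold sigmaL
  apply Finset.sum_eq_zero
  intro j _
  rw [Pi.zero_apply, norm_zero, Real.zero_rpow (ne_of_gt (one_div_pos.2 (hΛpos j)))]

lemma abs_le_sigma_rpow (hΛpos : ∀ j, 0 < Λ j) (z : Fin n → ℂ) (j : Fin n) :
    ‖z j‖ ≤ (sigmaL Λ z) ^ (Λ j) := by
  have h1 : ‖z j‖ ^ (1 / Λ j) ≤ sigmaL Λ z :=
    Finset.single_le_sum (f := fun i => ‖z i‖ ^ (1 / Λ i))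
      (fun i _ => Real.rpow_nonneg (norm_nonneg _) _) (Finset.mem_univ j)
  have h2 : ‖z j‖ = (‖z j‖ ^ (1 / Λ j)) ^ (Λ j) := by
    rw [← Real.rpow_mul (norm_nonneg _), one_div, inv_mul_cancel₀ (ne_of_gt (hΛpos j)),
      Real.rpow_one]
  rw [h2]
  exact Real.rpow_le_rpow (Real.rpow_nonneg (norm_nonneg _) _) h1 (le_of_lt (hΛpos j))

lemma sigmaL_smul_le (hΛpos : ∀ j, 0 < Λ j) (z : Fin n → ℂ) {t : ℝ}
    (ht : t ∈ Icc (0:ℝ) 1) : sigmaL Λ (t • z) ≤ sigmaL Λ z := by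
  apply Finset.sum_le_sum
  intro j _
  apply Real.rpow_le_rpow (norm_nonneg _) _ (le_of_lt (one_div_pos.2 (hΛpos j)))
  rw [Pi.smul_apply, Complex.real_smul, norm_mul, Complex.norm_real, Real.norm_eq_abs, abs_of_nonneg ht.1]
  exact mul_le_of_le_one_left (norm_nonneg _) ht.2

lemma rpow_tendsto_zero {ε : ℕ → ℝ} (hεlim : Tendsto ε atTop (nhds 0)) {c : ℝ} (hc : 0 < c) :
    Tendsto (fun m => ε m ^ c) atTop (nhds 0) := by
  have hcont : ContinuousAt (fun x : ℝ => x ^ c) 0 :=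
    Real.continuousAt_rpow_const 0 c (Or.inr (le_of_lt hc))
  have := hcont.tendsto.comp hεlim
  rwa [Real.zero_rpow (ne_of_gt hc)] at this

lemma tendsto_alpha (hΛpos : ∀ j, 0 < Λ j) {C : ℝ} (hC : 0 < C) {ε : ℕ → ℝ}
    (hεpos : ∀ m, 0 < ε m) (hεlim : Tendsto ε atTop (nhds 0)) {α : ℕ → Fin n → ℂ}
    (hα : ∀ m, sigmaL Λ (α m) ≤ C * ε m) : Tendsto α atTop (nhds 0) := by
  rw [tendsto_pi_nhds]
  intro j
  have hb : Tendsto (fun m => (C * ε m) ^ (Λ j)) atTop (nhds 0) := by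
    have h1 : Tendsto (fun m => C * ε m) atTop (nhds 0) := by
      simpa using hεlim.const_mul C
    have hcont : ContinuousAt (fun x : ℝ => x ^ (Λ j)) 0 :=
      Real.continuousAt_rpow_const 0 _ (Or.inr (le_of_lt (hΛpos j)))
    have := hcont.tendsto.comp h1
    rwa [Real.zero_rpow (ne_of_gt (hΛpos j))] at this
  simp only [Pi.zero_apply]
  rw [tendsto_zero_iff_norm_tendsto_zero]
  apply squeeze_zero (fun m => norm_nonneg _) _ hb
  intro m
  calc ‖α m j‖ ≤ (sigmaL Λ (α m)) ^ (Λ j) := abs_le_sigma_rpow hΛpos _ j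
    _ ≤ (C * ε m) ^ (Λ j) :=
        Real.rpow_le_rpow (sigmaL_nonneg _) (hα m) (le_of_lt (hΛpos j))

lemma conv_neg {g : (Fin n → ℂ) → ℂ} (hU : IsOpen U) (hU0 : (0 : Fin n → ℂ) ∈ U)
    (hg : ContinuousOn g U) {ν : ℝ} (hν : ν < 0) (hΛpos : ∀ j, 0 < Λ j) {C : ℝ} (hC : 0 < C)
    {ε : ℕ → ℝ} (hεpos : ∀ m, 0 < ε m) (hεlim : Tendsto ε atTop (nhds 0))
    {α : ℕ → Fin n → ℂ} (hα : ∀ m, sigmaL Λ (α m) ≤ C * ε m) :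
    Tendsto (fun m => ((ε m ^ (-ν) : ℝ) : ℂ) * g (α m)) atTop (nhds 0) := by
  have h1 : Tendsto (fun m => ((ε m ^ (-ν) : ℝ) : ℂ)) atTop (nhds 0) := by
    have := rpow_tendsto_zero hεlim (by linarith : (0:ℝ) < -ν)
    have h2 := (Complex.continuous_ofReal.tendsto 0).comp this
    simpa [Function.comp_def] using h2
  have h2 : Tendsto (fun m => g (α m)) atTop (nhds (g 0)) :=
    (hg.continuousAt (hU.mem_nhds hU0)).tendsto.comp
      (tendsto_alpha hΛpos hC hεpos hεlim hα)
  simpa using h1.mul h2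

lemma fderiv_apply_bound (g : (Fin n → ℂ) → ℂ) (β a : Fin n → ℂ) :
    ‖fderiv ℝ g β a‖ ≤
      ∑ j, ‖a j‖ * (‖Wop (-Complex.I) j g β‖ + ‖Wop Complex.I j g β‖) := by
  set D := fderiv ℝ g β with hD
  have ha' : a = ∑ j, Pi.single j (a j) := (Finset.univ_sum_single a).symm
  have h0 : D a = ∑ j, D (Pi.single j (a j)) := by
    conv_lhs => rw [ha']
    rw [map_sum]
  rw [h0]
  refine (norm_sum_le _ _).trans (Finset.sum_le_sum fun j _ => ?_)
  have hdecomp : D (Pi.single j (a j)) =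
      (a j) * (Wop (-Complex.I) j g β) + (starRingEnd ℂ) (a j) * (Wop Complex.I j g β) := by
    have h1 : Pi.single j (a j) =
        (a j).re • (Pi.single j (1:ℂ) : Fin n → ℂ) + (a j).im • (Pi.single j Complex.I : Fin n → ℂ) := by
      rw [← Pi.single_smul, ← Pi.single_smul, ← Pi.single_add]
      congr 1
      simp [Complex.real_smul]
    rw [h1, map_add, map_smul, map_smul]
    have hWm : Wop (-Complex.I) j g β
        = (1/2 : ℂ) * (D (Pi.single j 1) + (-Complex.I) * D (Pi.single j Complex.I)) := rfl
    have hWp : Wop Complex.I j g β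
        = (1/2 : ℂ) * (D (Pi.single j 1) + Complex.I * D (Pi.single j Complex.I)) := rfl
    rw [hWm, hWp]
    set A := D (Pi.single j 1)
    set B := D (Pi.single j Complex.I)
    simp only [Complex.real_smul, smul_eq_mul]
    obtain ⟨x, y⟩ := a j
    have hz : Complex.mk x y = (x : ℂ) + (y : ℂ) * Complex.I := by
      simp [Complex.ext_iff]
    have hconj : (starRingEnd ℂ) ((x : ℂ) + (y : ℂ) * Complex.I) = (x : ℂ) - (y : ℂ) * Complex.I := by
      simp [Complex.ext_iff]
    simp only [hz, hconj]
    linear_combination ((y : ℂ) * B) * Complex.I_sq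
  rw [hdecomp]
  refine (norm_add_le _ _).trans ?_
  rw [norm_mul, norm_mul, Complex.norm_conj]
  rw [mul_add]

lemma exists_bound (hU : IsOpen U) {r : ℝ} (hball : Metric.closedBall (0 : Fin n → ℂ) r ⊆ U)
    {g : (Fin n → ℂ) → ℂ} (hg : ContDiffOn ℝ (⊤:ℕ∞) g U) (hg0 : g 0 = 0)
    (hΛpos : ∀ j, 0 < Λ j) (a : Fin n → ℂ) (ha : ‖a‖ ≤ r) :
    ∃ β : Fin n → ℂ, sigmaL Λ β ≤ sigmaL Λ a ∧
      ‖g a‖ ≤ ∑ j, ‖a j‖ *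
        (‖Wop (-Complex.I) j g β‖ + ‖Wop Complex.I j g β‖) := by
  have seg : ∀ t ∈ Icc (0:ℝ) 1, t • a ∈ U := by
    intro t ht
    apply hball
    rw [Metric.mem_closedBall, dist_zero_right, norm_smul, Real.norm_eq_abs,
      abs_of_nonneg ht.1]
    exact le_trans (mul_le_of_le_one_left (norm_nonneg a) ht.2) ha
  have hderiv : ∀ t ∈ Icc (0:ℝ) 1, HasDerivWithinAt (fun s : ℝ => g (s • a))
      (fderiv ℝ g (t • a) a) (Icc 0 1) t := by
    intro t ht
    have hdiff : DifferentiableAt ℝ g (t • a) :=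
      (hg.contDiffAt (hU.mem_nhds (seg t ht))).differentiableAt (by simp)
    have hline : HasDerivAt (fun s : ℝ => s • a) a t := by
      simpa using (hasDerivAt_id t).smul_const a
    exact (hdiff.hasFDerivAt.comp_hasDerivAt t hline).hasDerivWithinAt
  have hψ : ContinuousOn (fun t : ℝ => ‖fderiv ℝ g (t • a) a‖) (Icc 0 1) := by
    have hfd : ContinuousOn (fderiv ℝ g) U :=
      hg.continuousOn_fderiv_of_isOpen hU (by exact_mod_cast le_top)
    have hsm : Continuous (fun t : ℝ => t • a) := continuous_id.smul continuous_const
    exact (((ContinuousLinearMap.apply ℝ ℂ a).continuous.comp_continuousOn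
      (hfd.comp hsm.continuousOn (fun t ht => seg t ht)))).norm
  obtain ⟨t₀, ht₀, hmax⟩ := isCompact_Icc.exists_isMaxOn (nonempty_Icc.2 zero_le_one) hψ
  have hmv := norm_image_sub_le_of_norm_deriv_le_segment' hderiv
    (fun t ht => (isMaxOn_iff.1 hmax) t (Ico_subset_Icc_self ht)) 1
    (right_mem_Icc.2 zero_le_one)
  simp only [one_smul, zero_smul, hg0, sub_zero, mul_one, sub_self] at hmv
  exact ⟨t₀ • a, sigmaL_smul_le hΛpos a ht₀, hmv.trans (fderiv_apply_bound g _ a)⟩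

lemma main_ind (hΛpos : ∀ j, 0 < Λ j) {C : ℝ} (hC : 0 < C) (hU : IsOpen U)
    (hU0 : (0 : Fin n → ℂ) ∈ U) {lam0 : ℝ} (hlam0 : 0 < lam0) (hlamle : ∀ j, lam0 ≤ Λ j) :
    ∀ (k : ℕ) (g : (Fin n → ℂ) → ℂ), ContDiffOn ℝ (⊤:ℕ∞) g U → ∀ ν : ℝ, ν < k * lam0 →
    (∀ L : List (ℂ × Fin n), (∀ x ∈ L, x.1 = -Complex.I ∨ x.1 = Complex.I) →
      listWt Λ L ≤ ν → applyOps L g 0 = 0) →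
    ∀ (ε : ℕ → ℝ) (α : ℕ → Fin n → ℂ), (∀ m, 0 < ε m) → Tendsto ε atTop (nhds 0) →
    (∀ m, sigmaL Λ (α m) ≤ C * ε m) →
    Tendsto (fun m => ((ε m ^ (-ν) : ℝ) : ℂ) * g (α m)) atTop (nhds 0) := by
  intro k
  induction k with
  | zero =>
      intro g hg ν hν H ε α hεpos hεlim hα
      exact conv_neg hU hU0 hg.continuousOn (by simpa using hν) hΛpos hC hεpos hεlim hα
  | succ k ih =>
      intro g hg ν hν H ε α hεpos hεlim hα
      by_cases hν0 : ν < 0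
      · exact conv_neg hU hU0 hg.continuousOn hν0 hΛpos hC hεpos hεlim hα
      push_neg at hν0
      have hg0 : g 0 = 0 := H [] (by simp) (by simpa [listWt] using hν0)
      obtain ⟨r, hr, hball⟩ : ∃ r > 0, Metric.closedBall (0 : Fin n → ℂ) r ⊆ U :=
        Metric.nhds_basis_closedBall.mem_iff.1 (hU.mem_nhds hU0)
      have halim := tendsto_alpha hΛpos hC hεpos hεlim hα
      have hev : ∀ᶠ m in atTop, ‖α m‖ ≤ r := by
        have h1 : ∀ᶠ z in nhds (0 : Fin n → ℂ), z ∈ Metric.closedBall (0 : Fin n → ℂ) r :=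
          Metric.closedBall_mem_nhds 0 hr
        filter_upwards [halim.eventually h1] with m hm
        simpa [Metric.mem_closedBall, dist_zero_right] using hm
      have key : ∀ m, ∃ β : Fin n → ℂ, sigmaL Λ β ≤ C * ε m ∧ (‖α m‖ ≤ r →
          ‖g (α m)‖ ≤ ∑ j, ‖α m j‖ *
            (‖Wop (-Complex.I) j g β‖ + ‖Wop Complex.I j g β‖)) := by
        intro m
        by_cases h : ‖α m‖ ≤ r
        · obtain ⟨β, hβ1, hβ2⟩ := exists_bound hU hball hg hg0 hΛpos (α m) h
          exact ⟨β, hβ1.trans (hα m), fun _ => hβ2⟩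
        · exact ⟨0, by rw [sigmaL_zero hΛpos]; exact le_of_lt (mul_pos hC (hεpos m)), fun h' => absurd h' h⟩
      choose β hβσ hβbd using key
      have hWtend : ∀ (c : ℂ), (c = -Complex.I ∨ c = Complex.I) → ∀ j : Fin n,
          Tendsto (fun m => ((ε m ^ (Λ j - ν) : ℝ) : ℂ) * Wop c j g (β m)) atTop (nhds 0) := by
        intro c hc j
        have hν' : ν - Λ j < k * lam0 := by
          have h2 := hlamle j
          push_cast at hν
          linarith
        have hH' : ∀ L : List (ℂ × Fin n), (∀ x ∈ L, x.1 = -Complex.I ∨ x.1 = Complex.I) →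
            listWt Λ L ≤ ν - Λ j → applyOps L (Wop c j g) 0 = 0 := by
          intro L hL hw
          have heq : applyOps L (Wop c j g) = applyOps (L ++ [(c, j)]) g := by
            rw [applyOps_append]; rfl
          rw [heq]
          apply H
          · intro x hx
            rcases List.mem_append.1 hx with h1 | h2
            · exact hL x h1
            · have : x = (c, j) := by simpa using h2
              rw [this]; exact hc
          · rw [listWt_append]
            have : listWt Λ [(c, j)] = Λ j := by simp [listWt]
            rw [this]; linarith
        have hmain := ih (Wop c j g) (Wop_contDiffOn hU hg c j) (ν - Λ j) hν' hH' ε β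
          hεpos hεlim hβσ
        have hexp : -(ν - Λ j) = Λ j - ν := by ring
        rwa [hexp] at hmain
      have hFlim : Tendsto (fun m => ∑ j, C ^ (Λ j) * ((ε m ^ (Λ j - ν)) *
          (‖Wop (-Complex.I) j g (β m)‖ + ‖Wop Complex.I j g (β m)‖))) atTop (nhds 0) := by
        have hptwise : ∀ j : Fin n, Tendsto (fun m : ℕ => C ^ (Λ j) * ((ε m ^ (Λ j - ν)) *
            (‖Wop (-Complex.I) j g (β m)‖ + ‖Wop Complex.I j g (β m)‖))) atTop (nhds 0) := by
          intro j
          have hterm : ∀ (c : ℂ), (c = -Complex.I ∨ c = Complex.I) →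
              Tendsto (fun m => (ε m ^ (Λ j - ν)) * ‖Wop c j g (β m)‖) atTop (nhds 0) := by
            intro c hc
            have t1 := tendsto_zero_iff_norm_tendsto_zero.1 (hWtend c hc j)
            have heq : (fun m => ‖((ε m ^ (Λ j - ν) : ℝ) : ℂ) * Wop c j g (β m)‖)
                = fun m => (ε m ^ (Λ j - ν)) * ‖Wop c j g (β m)‖ := by
              funext m
              rw [norm_mul, Complex.norm_real, Real.norm_eq_abs,
                abs_of_nonneg (Real.rpow_nonneg (le_of_lt (hεpos m)) _)]
            rwa [heq] at t1
          have t2 := (hterm (-Complex.I) (Or.inl rfl)).add (hterm Complex.I (Or.inr rfl))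
          have t3 : Tendsto (fun m => (ε m ^ (Λ j - ν)) *
              (‖Wop (-Complex.I) j g (β m)‖ + ‖Wop Complex.I j g (β m)‖)) atTop (nhds 0) := by
            have heq2 : (fun m => (ε m ^ (Λ j - ν)) *
                (‖Wop (-Complex.I) j g (β m)‖ + ‖Wop Complex.I j g (β m)‖))
                = fun m => (ε m ^ (Λ j - ν)) * ‖Wop (-Complex.I) j g (β m)‖
                  + (ε m ^ (Λ j - ν)) * ‖Wop Complex.I j g (β m)‖ := by
              funext m; ring
            rw [heq2]; simpa using t2
          simpa using t3.const_mul (C ^ (Λ j))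
        have hsum := tendsto_finset_sum (Finset.univ : Finset (Fin n))
          (a := fun _ : Fin n => (0:ℝ)) (fun j _ => hptwise j)
        simpa using hsum
      have hevbd : ∀ᶠ m in atTop, ‖((ε m ^ (-ν) : ℝ) : ℂ) * g (α m)‖ ≤
          ∑ j, C ^ (Λ j) * ((ε m ^ (Λ j - ν)) *
            (‖Wop (-Complex.I) j g (β m)‖ + ‖Wop Complex.I j g (β m)‖)) := by
        filter_upwards [hev] with m hm
        have hb := hβbd m hm
        rw [norm_mul, Complex.norm_real, Real.norm_eq_abs,
          abs_of_nonneg (Real.rpow_nonneg (le_of_lt (hεpos m)) _)]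
        have step1 : ε m ^ (-ν) * ‖g (α m)‖ ≤ ε m ^ (-ν) * ∑ j, ‖α m j‖ *
            (‖Wop (-Complex.I) j g (β m)‖ + ‖Wop Complex.I j g (β m)‖) :=
          mul_le_mul_of_nonneg_left hb (Real.rpow_nonneg (le_of_lt (hεpos m)) _)
        refine step1.trans ?_
        rw [Finset.mul_sum]
        refine Finset.sum_le_sum fun j _ => ?_
        have habs : ‖α m j‖ ≤ (C * ε m) ^ (Λ j) :=
          (abs_le_sigma_rpow hΛpos _ j).trans
            (Real.rpow_le_rpow (sigmaL_nonneg _) (hα m) (le_of_lt (hΛpos j)))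
        have hsplit : (C * ε m) ^ (Λ j) = C ^ (Λ j) * ε m ^ (Λ j) :=
          Real.mul_rpow (le_of_lt hC) (le_of_lt (hεpos m))
        have hexp : ε m ^ (-ν) * ε m ^ (Λ j) = ε m ^ (Λ j - ν) := by
          rw [← Real.rpow_add (hεpos m)]; ring_nf
        have hD : 0 ≤ ‖Wop (-Complex.I) j g (β m)‖ + ‖Wop Complex.I j g (β m)‖ :=
          add_nonneg (norm_nonneg _) (norm_nonneg _)
        calc ε m ^ (-ν) * (‖α m j‖ *
              (‖Wop (-Complex.I) j g (β m)‖ + ‖Wop Complex.I j g (β m)‖))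
            ≤ ε m ^ (-ν) * ((C ^ (Λ j) * ε m ^ (Λ j)) *
              (‖Wop (-Complex.I) j g (β m)‖ + ‖Wop Complex.I j g (β m)‖)) := by
              refine mul_le_mul_of_nonneg_left ?_ (Real.rpow_nonneg (le_of_lt (hεpos m)) _)
              refine mul_le_mul_of_nonneg_right ?_ hD
              rw [← hsplit]; exact habs
          _ = C ^ (Λ j) * ((ε m ^ (-ν) * ε m ^ (Λ j)) *
              (‖Wop (-Complex.I) j g (β m)‖ + ‖Wop Complex.I j g (β m)‖)) := by ring
          _ = C ^ (Λ j) * ((ε m ^ (Λ j - ν)) *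
              (‖Wop (-Complex.I) j g (β m)‖ + ‖Wop Complex.I j g (β m)‖)) := by rw [hexp]
      rw [tendsto_zero_iff_norm_tendsto_zero]
      exact squeeze_zero' (Eventually.of_forall fun m => norm_nonneg _) hevbd hFlim

lemma mem_pList {x : ℂ × Fin n} {c : ℂ} {p : Fin n → ℕ} (hx : x ∈ pList c p) : x.1 = c := by
  unfold pList at hx
  obtain ⟨j, _, hx2⟩ := List.mem_flatMap.1 hx
  rw [List.eq_of_mem_replicate hx2]

end Aux

/-- If `f ∈ O(μ,Λ)` is smooth near `0`, `ε_j → 0⁺`,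
`σ_Λ(α_j) ≤ C ε_j`, and `wt(p)+wt(q) ≤ μ`, then
`ε_j^(wt(p)+wt(q)-μ) · D^p D̄^q f(α_j) → 0`. -/
theorem stmt_10 {n : ℕ} (Λ : Fin n → ℝ) (hΛpos : ∀ j, 0 < Λ j) (hΛle : ∀ j, Λ j ≤ 1)
    (μ : ℝ) (hμ : 0 < μ) (f : (Fin n → ℂ) → ℂ)
    (hsmooth : ∃ U : Set (Fin n → ℂ), IsOpen U ∧ (0 : Fin n → ℂ) ∈ U ∧ ContDiffOn ℝ (⊤ : ℕ∞) f U)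
    (hf : memO Λ μ f) (C : ℝ) (hC : 0 < C)
    (ε : ℕ → ℝ) (hεpos : ∀ j, 0 < ε j) (hεlim : Tendsto ε atTop (nhds 0))
    (α : ℕ → (Fin n → ℂ)) (hα : ∀ j, sigmaL Λ (α j) ≤ C * ε j)
    (p q : Fin n → ℕ) (hpq : wtL Λ p + wtL Λ q ≤ μ) :
    Tendsto (fun j => ((ε j ^ (wtL Λ p + wtL Λ q - μ) : ℝ) : ℂ) *
        wDmulti p (wDbarMulti q f) (α j)) atTop (nhds 0) := by
  obtain ⟨U, hU, hU0, hfU⟩ := hsmooth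
  have hf' : ContDiffOn ℝ (⊤:ℕ∞) f U := hfU.of_le (by simp)
  set ν : ℝ := μ - (wtL Λ p + wtL Λ q) with hν
  set g₀ : (Fin n → ℂ) → ℂ := wDmulti p (wDbarMulti q f) with hg₀
  have hg₀eq : g₀ = applyOps (pList (-Complex.I) p ++ pList Complex.I q) f := by
    rw [hg₀, wDmulti_eq, wDbarMulti_eq, applyOps_append]
  have hg₀smooth : ContDiffOn ℝ (⊤:ℕ∞) g₀ U := by
    rw [hg₀eq]; exact applyOps_contDiffOn hU hf' _
  have Htop : ∀ L : List (ℂ × Fin n), (∀ x ∈ L, x.1 = -Complex.I ∨ x.1 = Complex.I) →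
      listWt Λ L ≤ ν → applyOps L g₀ 0 = 0 := by
    intro L hL hw
    rw [hg₀eq, ← applyOps_append]
    set L' := L ++ (pList (-Complex.I) p ++ pList Complex.I q) with hL'
    have hL'mem : ∀ x ∈ L', x.1 = -Complex.I ∨ x.1 = Complex.I := by
      intro x hx
      rcases List.mem_append.1 hx with h1 | h2
      · exact hL x h1
      · rcases List.mem_append.1 h2 with h3 | h4
        · exact Or.inl (mem_pList h3)
        · exact Or.inr (mem_pList h4)
    obtain ⟨a, b, hperm⟩ := decompose L' hL'mem
    have h0 : applyOps L' f 0 = applyOps (pList (-Complex.I) a ++ pList Complex.I b) f 0 :=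
      applyOps_perm hU hf' hperm hU0
    rw [h0, applyOps_append, ← wDbarMulti_eq, ← wDmulti_eq]
    apply hf
    have hwt : (∑ j, ((a j + b j : ℕ) : ℝ) * Λ j) = wtL Λ a + wtL Λ b := by
      unfold wtL
      rw [← Finset.sum_add_distrib]
      apply Finset.sum_congr rfl
      intro j _
      push_cast
      ring
    rw [hwt]
    have h1 : wtL Λ a + wtL Λ b = listWt Λ L' := by
      rw [← listWt_pList Λ (-Complex.I) a, ← listWt_pList Λ Complex.I b, ← listWt_append,
        ← listWt_perm Λ hperm]
    have h2 : listWt Λ L' = listWt Λ L + (wtL Λ p + wtL Λ q) := by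
      rw [hL', listWt_append, listWt_append, listWt_pList, listWt_pList]
    rw [h1, h2]
    have : listWt Λ L ≤ ν := hw
    rw [hν] at this
    linarith
  obtain ⟨lam0, hlam0, hlamle⟩ : ∃ t : ℝ, 0 < t ∧ ∀ j, t ≤ Λ j := by
    rcases isEmpty_or_nonempty (Fin n) with h | h
    · exact ⟨1, one_pos, fun j => (h.elim j)⟩
    · exact ⟨Finset.univ.inf' Finset.univ_nonempty Λ,
        (Finset.lt_inf'_iff _).2 fun j _ => hΛpos j,
        fun j => Finset.inf'_le _ (Finset.mem_univ j)⟩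
  obtain ⟨k, hk⟩ := exists_nat_gt (ν / lam0)
  have hνk : ν < k * lam0 := by
    rw [div_lt_iff₀ hlam0] at hk
    linarith
  have hmain := main_ind hΛpos hC hU hU0 hlam0 hlamle k g₀ hg₀smooth ν hνk Htop ε α
    hεpos hεlim hα
  have hexp : wtL Λ p + wtL Λ q - μ = -ν := by rw [hν]; ring
  rw [hexp]
  exact hmain
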